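/- arXiv:1811.05966 — 3 statements merged into one kernel-verified Lean document; each statement's English description precedes it below -/
import Mathlib

section
/- Let \(\mathfrak{g}\) be a finite-dimensional Lie algebra over \(\mathbb{Q}\) (or any field of characteristic zero), let \(S \in \mathfrak{g}\) be a semisimple element whose adjoint action is diagonalizable with rational eigenvalues, and let \(\varphi \in \mathfrak{g}^*\) satisfy \(\mathrm{ad}^*(S)\varphi = -2\varphi\). Set \(\mathfrak{u} := \mathfrak{g}^S_{\geq 1}\) (the sum of \(\mathrm{ad}(S)\)-eigenspaces with eigenvalue at least 1). Then the kernel of the restriction \(\omega_\varphi|_{\mathfrak{u}}\) equals \(\mathfrak{g}^S_{>1} \oplus (\mathfrak{g}^S_1 \cap \mathfrak{g}_\varphi)\), where \(\mathfrak{g}_\varphi\) is the coadjoint stabilizer of \(\varphi\). -/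
/-- The `q`-eigenspace of `ad S`, for a rational number `q` (cast into `K`). -/
noncomputable def adE (K : Type*) {L : Type*} [Field K] [LieRing L] [LieAlgebra K L]
    (S : L) (q : ℚ) : Submodule K L :=
  Module.End.eigenspace (LieAlgebra.ad K L S) (q : K)

/-- `𝔤^S_{≥ c}`: the sum of eigenspaces of `ad S` with (rational) eigenvalue `≥ c`. -/
noncomputable def gge (K : Type*) {L : Type*} [Field K] [LieRing L] [LieAlgebra K L]
    (S : L) (c : ℚ) : Submodule K L :=
  ⨆ q : ℚ, ⨆ _ : c ≤ q, adE K S q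

/-- `𝔤^S_{> c}`: the sum of eigenspaces of `ad S` with (rational) eigenvalue `> c`. -/
noncomputable def ggt (K : Type*) {L : Type*} [Field K] [LieRing L] [LieAlgebra K L]
    (S : L) (c : ℚ) : Submodule K L :=
  ⨆ q : ℚ, ⨆ _ : c < q, adE K S q

/-- `𝔤^S_{≤ c}`: the sum of eigenspaces of `ad S` with (rational) eigenvalue `≤ c`. -/
noncomputable def gle (K : Type*) {L : Type*} [Field K] [LieRing L] [LieAlgebra K L]
    (S : L) (c : ℚ) : Submodule K L :=
  ⨆ q : ℚ, ⨆ _ : q ≤ c, adE K S q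

/-- `𝔤^S_{< c}`: the sum of eigenspaces of `ad S` with (rational) eigenvalue `< c`. -/
noncomputable def glt (K : Type*) {L : Type*} [Field K] [LieRing L] [LieAlgebra K L]
    (S : L) (c : ℚ) : Submodule K L :=
  ⨆ q : ℚ, ⨆ _ : q < c, adE K S q

/-- `S` is rational semisimple: `ad S` is diagonalizable with rational eigenvalues. -/
def IsRatSS (K : Type*) {L : Type*} [Field K] [LieRing L] [LieAlgebra K L] (S : L) : Prop :=
  (⨆ q : ℚ, adE K S q) = ⊤

/-- The stabilizer `𝔤_φ` of `φ` under the coadjoint action: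
all `X` with `φ ∘ ad X = 0`, i.e. `φ ⁅X, Y⁆ = 0` for all `Y`. -/
def coStab (K : Type*) {L : Type*} [Field K] [LieRing L] [LieAlgebra K L]
    (φ : Module.Dual K L) : Submodule K L where
  carrier := {X | ∀ Y : L, φ ⁅X, Y⁆ = 0}
  add_mem' := by intro a b ha hb; intro Y; simp [add_lie, ha Y, hb Y]
  zero_mem' := by intro Y; simp
  smul_mem' := by intro c x hx; intro Y; simp [smul_lie, hx Y]

/-- `𝔫_{S,φ} = ker (ω_φ|_{𝔤^S_{≥1}})`, the radical of the form `ω_φ(X,Y) = φ ⁅X,Y⁆`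
restricted to `𝔲 = 𝔤^S_{≥1}` (note `φ ⁅Y, X⁆ = 0` for all `Y ∈ 𝔲` iff
`φ ⁅X, Y⁆ = 0` for all `Y ∈ 𝔲`, by antisymmetry of the bracket). -/
noncomputable def nSub (K : Type*) {L : Type*} [Field K] [LieRing L] [LieAlgebra K L]
    (S : L) (φ : Module.Dual K L) : Submodule K L :=
  gge K S 1 ⊓ ⨅ Y : (gge K S 1 : Submodule K L),
    LinearMap.ker (φ ∘ₗ LieAlgebra.ad K L (Y : L))


section aux
variable {K L : Type*} [Field K] [CharZero K] [LieRing L] [LieAlgebra K L]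

lemma bracket_adE {S X Y : L} {q r : ℚ} (hX : X ∈ adE K S q) (hY : Y ∈ adE K S r) :
    ⁅X, Y⁆ ∈ adE K S (q + r) := by
  rw [adE, Module.End.mem_eigenspace_iff, LieAlgebra.ad_apply] at *
  rw [leibniz_lie, hX, hY]
  push_cast
  rw [smul_lie, lie_smul, add_smul]

lemma phi_zero (S : L) (φ : Module.Dual K L) (hpair : ∀ X : L, φ ⁅S, X⁆ = 2 * φ X)
    {q : ℚ} (hq : q ≠ 2) {X : L} (hX : X ∈ adE K S q) : φ X = 0 := by
  rw [adE, Module.End.mem_eigenspace_iff, LieAlgebra.ad_apply] at hX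
  have h := hpair X
  rw [hX, map_smul] at h
  rw [smul_eq_mul] at h
  have h2 : ((q : K) - 2) * φ X = 0 := by linear_combination h
  have hq2 : ((q : K) - 2) ≠ 0 := by
    intro h0
    apply hq
    have : (q : K) = ((2 : ℚ) : K) := by rw [sub_eq_zero] at h0; push_cast; exact h0
    exact_mod_cast Rat.cast_injective this
  exact (mul_eq_zero.mp h2).resolve_left hq2

end aux

section key
variable {K L : Type*} [Field K] [CharZero K] [LieRing L] [LieAlgebra K L]

lemma key_zero (S : L) (φ : Module.Dual K L) (hpair : ∀ X : L, φ ⁅S, X⁆ = 2 * φ X)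
    {P Q : ℚ → Prop} (h2 : ∀ q r, P q → Q r → q + r ≠ 2)
    {X Y : L} (hX : X ∈ ⨆ q : ℚ, ⨆ _ : P q, adE K S q)
    (hY : Y ∈ ⨆ r : ℚ, ⨆ _ : Q r, adE K S r) : φ ⁅X, Y⁆ = 0 := by
  have h1 : ∀ q, P q → ∀ X' ∈ adE K S q, φ ⁅X', Y⁆ = 0 := by
    intro q hq X' hX'
    have hle : (⨆ r : ℚ, ⨆ _ : Q r, adE K S r) ≤
        LinearMap.ker (φ ∘ₗ (LieAlgebra.ad K L X' : L →ₗ[K] L)) := by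
      refine iSup₂_le fun r hr Y' hY' => ?_
      simp only [LinearMap.mem_ker, LinearMap.comp_apply, LieAlgebra.ad_apply]
      exact phi_zero S φ hpair (h2 q r hq hr) (bracket_adE hX' hY')
    simpa [LieAlgebra.ad_apply] using hle hY
  have hle : (⨆ q : ℚ, ⨆ _ : P q, adE K S q) ≤
      LinearMap.ker (φ ∘ₗ (LieAlgebra.ad K L Y : L →ₗ[K] L)) := by
    refine iSup₂_le fun q hq X' hX' => ?_
    simp only [LinearMap.mem_ker, LinearMap.comp_apply, LieAlgebra.ad_apply]
    rw [← lie_skew, map_neg, h1 q hq X' hX', neg_zero]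
  have := hle hX
  simp only [LinearMap.mem_ker, LinearMap.comp_apply, LieAlgebra.ad_apply] at this
  rw [← lie_skew, map_neg, this, neg_zero]

end key

/-- For a Whittaker pair `(S, φ)` (with `S` rational semisimple and
`ad^*(S) φ = -2φ`, i.e. `φ ⁅S, X⁆ = 2 φ(X)`), setting `𝔲 := 𝔤^S_{≥1}`, the kernel of
the restriction `ω_φ|_𝔲` equals `𝔤^S_{>1} ⊕ (𝔤^S_1 ∩ 𝔤_φ)`. -/
theorem ker_omega_restricted
    {K L : Type*} [Field K] [CharZero K] [LieRing L] [LieAlgebra K L]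
    [FiniteDimensional K L]
    (S : L) (φ : Module.Dual K L)
    (hS : IsRatSS K S) (hpair : ∀ X : L, φ ⁅S, X⁆ = 2 * φ X) :
    {X : L | X ∈ gge K S 1 ∧ ∀ Y ∈ gge K S 1, φ ⁅X, Y⁆ = 0} =
      ↑(ggt K S 1 ⊔ (adE K S 1 ⊓ coStab K φ)) := by
  have hpq : ∀ q r : ℚ, 1 < q → 1 ≤ r → q + r ≠ 2 := by
    intro q r hq hr h; linarith
  have hadE_le : adE K S 1 ≤ gge K S 1 := by
    rw [gge]; exact le_iSup₂_of_le 1 le_rfl le_rfl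
  ext X
  simp only [Set.mem_setOf_eq, SetLike.mem_coe]
  constructor
  · rintro ⟨hX, hφ⟩
    have hsplit : gge K S 1 ≤ adE K S 1 ⊔ ggt K S 1 := by
      rw [gge]
      refine iSup₂_le fun q hq => ?_
      rcases eq_or_lt_of_le hq with h | h
      · rw [← h]; exact le_sup_left
      · refine le_sup_of_le_right ?_
        rw [ggt]
        exact le_iSup₂_of_le q h le_rfl
    obtain ⟨a, ha, b, hb, hab⟩ := Submodule.mem_sup.mp (hsplit hX)
    have hbY1 : ∀ Y ∈ adE K S 1, φ ⁅b, Y⁆ = 0 := by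
      intro Y hY
      refine key_zero S φ hpair (P := (1 < ·)) (Q := (1 ≤ ·)) hpq ?_ ?_
      · rw [ggt] at hb; exact hb
      · have : adE K S 1 ≤ ⨆ r : ℚ, ⨆ _ : (1:ℚ) ≤ r, adE K S r :=
          le_iSup₂_of_le (1 : ℚ) le_rfl le_rfl
        exact this hY
    have haco : a ∈ coStab K φ := by
      intro Y
      have hYtop : Y ∈ ⨆ q : ℚ, adE K S q := hS ▸ Submodule.mem_top
      have hle : (⨆ q : ℚ, adE K S q) ≤
          LinearMap.ker (φ ∘ₗ (LieAlgebra.ad K L a : L →ₗ[K] L)) := by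
        refine iSup_le fun r => ?_
        intro Y' hY'
        simp only [LinearMap.mem_ker, LinearMap.comp_apply, LieAlgebra.ad_apply]
        by_cases hr : r = 1
        · subst hr
          have h1 : φ ⁅X, Y'⁆ = 0 := hφ Y' (hadE_le hY')
          have h2 : φ ⁅b, Y'⁆ = 0 := hbY1 Y' hY'
          have : X = a + b := hab.symm
          rw [this, add_lie, map_add, h2, add_zero] at h1
          exact h1
        · refine phi_zero S φ hpair (q := 1 + r) ?_ (bracket_adE ha hY')
          intro h; apply hr; linarith
      have := hle hYtop
      simpa [LieAlgebra.ad_apply] using this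
    rw [← hab]
    exact Submodule.add_mem _
      (Submodule.mem_sup_right (Submodule.mem_inf.mpr ⟨ha, haco⟩))
      (Submodule.mem_sup_left hb)
  · intro hX
    have hle : ggt K S 1 ⊔ (adE K S 1 ⊓ coStab K φ) ≤ gge K S 1 := by
      refine sup_le ?_ (le_trans inf_le_left hadE_le)
      rw [ggt, gge]
      exact iSup₂_le fun q hq => le_iSup₂_of_le q hq.le le_rfl
    refine ⟨hle hX, ?_⟩
    intro Y hY
    obtain ⟨a, ha, b, hb, hab⟩ := Submodule.mem_sup.mp hX
    have h1 : φ ⁅a, Y⁆ = 0 := by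
      refine key_zero S φ hpair (P := (1 < ·)) (Q := (1 ≤ ·)) hpq ?_ ?_
      · rw [ggt] at ha; exact ha
      · rw [gge] at hY; exact hY
    have h2 : φ ⁅b, Y⁆ = 0 := (Submodule.mem_inf.mp hb).2 Y
    rw [← hab, add_lie, map_add, h1, h2, add_zero]
end

section
/- Let \((S,\varphi)\) be a Whittaker pair in a finite-dimensional Lie algebra \(\mathfrak{g}\) over a field of characteristic zero, let \(\mathfrak{u} = \mathfrak{g}^S_{\geq 1}\) and \(\mathfrak{n}_{S,\varphi} = \ker(\omega_\varphi|_{\mathfrak{u}})\). Then \(\mathfrak{n}_{S,\varphi}\) is a Lie ideal of \(\mathfrak{u}\), and the quotient \(\mathfrak{u}/\mathfrak{n}_{S,\varphi}\) is an abelian Lie algebra. -/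
/-! The grading of `L` by the eigenvalues of `ad S` is compatible with the bracket, and since
`φ ∘ ad S = 2 φ`, the form `φ` vanishes on every `ad S`-eigenspace of eigenvalue `≠ 2`. Hence `φ`
kills `𝔤^S_{≥3} ⊇ ⁅𝔲, ⁅𝔲, 𝔲⁆⁆`, so that `⁅𝔲, 𝔲⁆ ⊆ 𝔫_{S,φ} ⊆ 𝔲`. -/

section WhittakerGrading

variable {K L : Type*} [Field K] [LieRing L] [LieAlgebra K L]

lemma gge_le_iff {S : L} {c : ℚ} {p : Submodule K L} :
    gge K S c ≤ p ↔ ∀ q, c ≤ q → adE K S q ≤ p := by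
  simp only [gge, iSup_le_iff]

lemma adE_le_gge {S : L} {c q : ℚ} (h : c ≤ q) : adE K S q ≤ gge K S c :=
  gge_le_iff.mp le_rfl q h

lemma gge_antitone (S : L) : Antitone (gge K S) := fun _ _ hcd =>
  gge_le_iff.mpr fun _ hq => adE_le_gge (hcd.trans hq)

variable [CharZero K]

lemma lie_mem_adE_add {S x y : L} {a b : ℚ} (hx : x ∈ adE K S a) (hy : y ∈ adE K S b) :
    ⁅x, y⁆ ∈ adE K S (a + b) := by
  rw [adE, Module.End.mem_eigenspace_iff, LieAlgebra.ad_apply] at *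
  rw [leibniz_lie, hx, hy, smul_lie, lie_smul, Rat.cast_add, add_smul]

lemma lie_mem_gge_add {S x y : L} {a b : ℚ} (hx : x ∈ gge K S a) (hy : y ∈ gge K S b) :
    ⁅x, y⁆ ∈ gge K S (a + b) := by
  let bracket : L →ₗ[K] L →ₗ[K] L := LieAlgebra.ad K L
  have hbracket : Submodule.map₂ bracket (gge K S a) (gge K S b) ≤ gge K S (a + b) := by
    rw [gge, gge, Submodule.map₂_iSup_left]
    refine iSup_le fun q => ?_
    rw [Submodule.map₂_iSup_left]
    refine iSup_le fun hq => ?_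
    rw [Submodule.map₂_iSup_right]
    refine iSup_le fun r => ?_
    rw [Submodule.map₂_iSup_right]
    refine iSup_le fun hr => ?_
    exact Submodule.map₂_le.mpr fun x hx y hy =>
      adE_le_gge (add_le_add hq hr) (lie_mem_adE_add hx hy)
  exact hbracket (Submodule.apply_mem_map₂ _ hx hy)

variable {S : L} {φ : Module.Dual K L}

lemma apply_eq_zero_of_mem_adE (hpair : ∀ X : L, φ ⁅S, X⁆ = 2 * φ X) {q : ℚ} (hq : q ≠ 2)
    {x : L} (hx : x ∈ adE K S q) : φ x = 0 := by
  rw [adE, Module.End.mem_eigenspace_iff, LieAlgebra.ad_apply] at hx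
  have hqK : (q : K) - 2 ≠ 0 := by
    rw [sub_ne_zero]; exact_mod_cast hq
  have h : ((q : K) - 2) * φ x = 0 := by
    have := hpair x
    rw [hx, map_smul, smul_eq_mul] at this
    linear_combination this
  exact (mul_eq_zero.mp h).resolve_left hqK

lemma gge_le_ker (hpair : ∀ X : L, φ ⁅S, X⁆ = 2 * φ X) {c : ℚ} (hc : 2 < c) :
    gge K S c ≤ LinearMap.ker φ :=
  gge_le_iff.mpr fun _ hq _ hx => apply_eq_zero_of_mem_adE hpair (by linarith) hx

lemma lie_mem_nSub (hpair : ∀ X : L, φ ⁅S, X⁆ = 2 * φ X) {X Y : L}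
    (hX : X ∈ gge K S 1) (hY : Y ∈ gge K S 1) : ⁅X, Y⁆ ∈ nSub K S φ := by
  have hXY : ⁅X, Y⁆ ∈ gge K S 2 := one_add_one_eq_two (R := ℚ) ▸ lie_mem_gge_add hX hY
  refine Submodule.mem_inf.mpr ⟨gge_antitone S (by norm_num) hXY, Submodule.mem_iInf _ |>.mpr ?_⟩
  intro Z
  have hZXY : ⁅(Z : L), ⁅X, Y⁆⁆ ∈ gge K S 3 := by
    convert lie_mem_gge_add Z.2 hXY using 2; norm_num
  exact gge_le_ker hpair (by norm_num) hZXY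

end WhittakerGrading

theorem nSub_ideal_abelian_quotient_general
    {K L : Type*} [Field K] [CharZero K] [LieRing L] [LieAlgebra K L]
    (S : L) (φ : Module.Dual K L)
    (hpair : ∀ X : L, φ ⁅S, X⁆ = 2 * φ X) :
    (∀ X ∈ gge K S 1, ∀ Y ∈ nSub K S φ, ⁅X, Y⁆ ∈ nSub K S φ) ∧
    (∀ X ∈ gge K S 1, ∀ Y ∈ gge K S 1, ⁅X, Y⁆ ∈ nSub K S φ) :=
  ⟨fun _ hX _ hY => lie_mem_nSub hpair hX (Submodule.mem_inf.mp hY).1,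
    fun _ hX _ hY => lie_mem_nSub hpair hX hY⟩

/-- For a Whittaker pair `(S, φ)` with `𝔲 = 𝔤^S_{≥1}` and
`𝔫_{S,φ} = ker (ω_φ|_𝔲)`, the subspace `𝔫_{S,φ}` is a Lie ideal of `𝔲` and the
quotient `𝔲 / 𝔫_{S,φ}` is abelian (i.e. `⁅𝔲, 𝔫_{S,φ}⁆ ⊆ 𝔫_{S,φ}` and
`⁅𝔲, 𝔲⁆ ⊆ 𝔫_{S,φ}`). -/
theorem nSub_ideal_abelian_quotient
    {K L : Type*} [Field K] [CharZero K] [LieRing L] [LieAlgebra K L]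
    [FiniteDimensional K L]
    (S : L) (φ : Module.Dual K L)
    (hS : IsRatSS K S) (hpair : ∀ X : L, φ ⁅S, X⁆ = 2 * φ X) :
    (∀ X ∈ gge K S 1, ∀ Y ∈ nSub K S φ, ⁅X, Y⁆ ∈ nSub K S φ) ∧
    (∀ X ∈ gge K S 1, ∀ Y ∈ gge K S 1, ⁅X, Y⁆ ∈ nSub K S φ) :=
  nSub_ideal_abelian_quotient_general S φ hpair
end

section
/- Let \(\mathfrak{g}\) be a finite-dimensional Lie algebra over a field of characteristic zero, \(H, Z\) commuting rational semisimple elements, \(H_t = H + tZ\) and \(\mathfrak{v}_t = \mathfrak{g}^{H_t}_{>1}\), \(\mathfrak{w}_t = \mathfrak{g}^{H_t}_1\). Suppose \(0 \leq s < t\) and every \(r \in (s,t)\) is regular (meaning \(\mathfrak{g}^{H_r}_1 \subseteq \mathfrak{g}^Z_0\)). Then \(\mathfrak{v}_t \oplus (\mathfrak{w}_t \cap \mathfrak{g}^Z_{<0}) = \mathfrak{v}_s \oplus (\mathfrak{w}_s \cap \mathfrak{g}^Z_{>0})\). -/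
universe u

section CompleteLattice

variable {α ι κ : Type*} [CompleteLattice α]

theorem biSup_le_biSup_of_eq_bot {f : ι → α} {P Q : ι → Prop}
    (h : ∀ i, P i → ¬Q i → f i = ⊥) : ⨆ i, ⨆ _ : P i, f i ≤ ⨆ i, ⨆ _ : Q i, f i :=
  iSup₂_le fun i hP => by
    by_cases hQ : Q i
    · exact le_iSup₂_of_le i hQ le_rfl
    · simp [h i hP hQ]

theorem iSup_iSup_fiber (f : ι → α) (w : ι → κ) (P : κ → Prop) :
    ⨆ q, ⨆ _ : P q, ⨆ i, ⨆ _ : w i = q, f i = ⨆ i, ⨆ _ : P (w i), f i :=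
  le_antisymm (iSup₂_le fun _ hq => iSup₂_le fun i hi => le_iSup₂_of_le i (hi ▸ hq) le_rfl)
    (iSup₂_le fun i hi => le_iSup₂_of_le (w i) hi (le_iSup₂_of_le i rfl le_rfl))

theorem biSup_sup_biSup (f : ι → α) (P Q : ι → Prop) :
    (⨆ i, ⨆ _ : P i, f i) ⊔ ⨆ i, ⨆ _ : Q i, f i = ⨆ i, ⨆ _ : P i ∨ Q i, f i := by
  simp only [iSup_or, iSup_sup_eq]

theorem iSupIndep.eq_iSup_fiber_of_le [IsModularLattice α] {g : κ → α} (hg : iSupIndep g)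
    {f : ι → α} (hf : ⨆ i, f i = ⊤) (w : ι → κ) (hfg : ∀ i, f i ≤ g (w i)) (q : κ) :
    g q = ⨆ i, ⨆ _ : w i = q, f i := by
  have hfiber : ⨆ q, ⨆ i, ⨆ _ : w i = q, f i = ⊤ := by
    simpa [iSup_comm (ι := κ)] using hf
  refine (congrFun ((hg.le_iff_eq_of_iSup_eq_top hfiber).mp fun q => ?_) q).symm
  exact iSup₂_le fun i hi => hi ▸ hfg i

variable [IsModularLattice α] [IsCompactlyGenerated α]

theorem iSupIndep.biSup_inf_biSup {f : ι → α} (hf : iSupIndep f) (P Q : ι → Prop) :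
    (⨆ i, ⨆ _ : P i, f i) ⊓ (⨆ i, ⨆ _ : Q i, f i) = ⨆ i, ⨆ _ : P i ∧ Q i, f i := by
  have hsplit : ⨆ i, ⨆ _ : P i, f i =
      (⨆ i, ⨆ _ : P i ∧ Q i, f i) ⊔ ⨆ i, ⨆ _ : P i ∧ ¬Q i, f i := by
    rw [biSup_sup_biSup]
    congr! 3 with i
    tauto
  have hdisj : Disjoint (⨆ i, ⨆ _ : P i ∧ ¬Q i, f i) (⨆ i, ⨆ _ : Q i, f i) :=
    hf.disjoint_biSup_biSup (s := {i | P i ∧ ¬Q i}) (t := {i | Q i})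
      (Set.disjoint_left.mpr fun _ hs ht => hs.2 ht)
  rw [hsplit, sup_inf_assoc_of_le _ (biSup_mono fun _ h => h.2), hdisj.eq_bot, sup_bot_eq]

theorem iSupIndep.inf_prod {ι κ : Type u} {A : ι → α} {B : κ → α} (hA : iSupIndep A)
    (hB : iSupIndep B) : iSupIndep fun p : ι × κ => A p.1 ⊓ B p.2 := by
  let e : ι × κ → (b : Bool) → cond b ι κ := fun p b => Bool.rec p.2 p.1 b
  have he : Function.Injective e := fun p q h => Prod.ext (congrFun h true) (congrFun h false)
  have := (iSupIndep.iInf (fun b => Bool.rec (motive := fun b => cond b ι κ → α) B A b)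
    (fun b => by cases b <;> assumption)).comp he
  simpa [Function.comp_def, iInf_bool_eq, e] using this

end CompleteLattice

theorem iSupIndep.ker_inf_iSup_le {R M ι : Type*} [Ring R] [AddCommGroup M] [Module R M]
    {E : ι → Submodule R M} (hE : iSupIndep E) {φ : Module.End R M}
    (hφ : ∀ i, Set.MapsTo φ (E i) (E i)) :
    LinearMap.ker φ ⊓ ⨆ i, E i ≤ ⨆ i, LinearMap.ker φ ⊓ E i := by
  classical
  rintro x ⟨hφx, hx⟩
  obtain ⟨c, hc, rfl⟩ := (Submodule.mem_iSup_iff_exists_finsupp E x).mp hx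
  have hzero := (iSupIndep_iff_finsetSum_eq_zero_imp_eq_zero E).mp hE c.support (φ ∘ c)
    (fun i _ => hφ i (hc i)) (by simpa [Finsupp.sum, map_sum] using hφx)
  refine (Submodule.mem_iSup_iff_exists_finsupp _ _).mpr ⟨c, fun i => ⟨?_, hc i⟩, rfl⟩
  by_cases hi : i ∈ c.support
  · exact hzero i hi
  · simp [Finsupp.notMem_support_iff.mp hi]

namespace Module.End

variable {K V : Type*} [Field K] [AddCommGroup V] [Module K V]

theorem eigenspace_inf_eigenspace_le_eigenspace_add_smul (f g : End K V) (a b c : K) :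
    f.eigenspace a ⊓ g.eigenspace b ≤ (f + c • g).eigenspace (a + c * b) := by
  intro x hx
  obtain ⟨hf, hg⟩ := Submodule.mem_inf.mp hx
  rw [mem_eigenspace_iff] at hf hg ⊢
  rw [LinearMap.add_apply, LinearMap.smul_apply, hf, hg, smul_smul, add_smul]

variable [CharZero K]

theorem iSupIndep_eigenspace_ratCast (f : End K V) :
    iSupIndep fun q : ℚ => f.eigenspace (q : K) :=
  f.eigenspaces_iSupIndep.comp Rat.cast_injective

theorem iSup_eigenspace_ratCast_eq_iSup {f : End K V} {ι : Type*} {F : ι → Submodule K V}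
    (hF : ⨆ i, F i = ⊤) (w : ι → ℚ) (hw : ∀ i, F i ≤ f.eigenspace (w i : K)) (P : ℚ → Prop) :
    ⨆ q : ℚ, ⨆ _ : P q, f.eigenspace (q : K) = ⨆ i, ⨆ _ : P (w i), F i := by
  simp_rw [(iSupIndep_eigenspace_ratCast f).eq_iSup_fiber_of_le hF w hw]
  exact iSup_iSup_fiber F w P

theorem _root_.Commute.iSup_eigenspace_inf_eigenspace_eq_top {f g : End K V} (hfg : Commute f g)
    (hf : ⨆ q : ℚ, f.eigenspace (q : K) = ⊤) (hg : ⨆ q : ℚ, g.eigenspace (q : K) = ⊤) :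
    ⨆ p : ℚ × ℚ, f.eigenspace (p.1 : K) ⊓ g.eigenspace (p.2 : K) = ⊤ := by
  rw [iSup_prod, eq_top_iff, ← hf]
  refine iSup_mono fun a => ?_
  have hmaps (b : ℚ) : Set.MapsTo (f - (a : K) • (1 : End K V))
      (g.eigenspace (b : K)) (g.eigenspace (b : K)) :=
    mapsTo_genEigenspace_of_comm (hfg.symm.sub_right ((Commute.one_right g).smul_right _)) _ 1
  calc f.eigenspace (a : K)
      = LinearMap.ker (f - (a : K) • (1 : End K V)) ⊓ ⨆ b : ℚ, g.eigenspace (b : K) := by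
        rw [hg, inf_top_eq, eigenspace_def]
    _ ≤ _ := by
        simpa only [← eigenspace_def] using (iSupIndep_eigenspace_ratCast g).ker_inf_iSup_le hmaps

end Module.End

theorem exists_wall_of_not_iff {𝕜 : Type*} [Field 𝕜] [LinearOrder 𝕜] [IsStrictOrderedRing 𝕜]
    {a b s t : 𝕜} (hst : s < t)
    (h : ¬((1 < a + t * b ∨ a + t * b = 1 ∧ b < 0) ↔ (1 < a + s * b ∨ a + s * b = 1 ∧ 0 < b))) :
    ∃ r, s < r ∧ r < t ∧ b ≠ 0 ∧ a + r * b = 1 := by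
  have hb : b ≠ 0 := by rintro rfl; simp at h
  suffices s < (1 - a) / b ∧ (1 - a) / b < t from ⟨_, this.1, this.2, hb, by field_simp; ring⟩
  rcases hb.lt_or_gt with hb | hb
  · have := mul_lt_mul_of_neg_right hst hb
    rw [lt_div_iff_of_neg hb, div_lt_iff_of_neg hb]
    grind
  · have := mul_lt_mul_of_pos_right hst hb
    rw [lt_div_iff₀ hb, div_lt_iff₀ hb]
    grind

section JointEigenspaces

variable (K : Type*) {L : Type*} [Field K] [LieRing L] [LieAlgebra K L]

noncomputable def jointAdE (H Z : L) (p : ℚ × ℚ) : Submodule K L :=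
  adE K H p.1 ⊓ adE K Z p.2

variable {K} [CharZero K]

theorem jointAdE_le_adE_add_smul (H Z : L) (r : ℚ) (p : ℚ × ℚ) :
    jointAdE K H Z p ≤ adE K (H + (r : K) • Z) (p.1 + r * p.2) := by
  simpa [jointAdE, adE] using Module.End.eigenspace_inf_eigenspace_le_eigenspace_add_smul
    (LieAlgebra.ad K L H) (LieAlgebra.ad K L Z) p.1 p.2 r

theorem iSupIndep_jointAdE (H Z : L) : iSupIndep (jointAdE K H Z) :=
  (Module.End.iSupIndep_eigenspace_ratCast _).inf_prod (Module.End.iSupIndep_eigenspace_ratCast _)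

theorem jointAdE_eq_bot_of_le_adE_zero {H Z : L} {p : ℚ × ℚ} (hp : p.2 ≠ 0)
    (h : jointAdE K H Z p ≤ adE K Z 0) : jointAdE K H Z p = ⊥ :=
  disjoint_self.mp
    (((Module.End.iSupIndep_eigenspace_ratCast _).pairwiseDisjoint hp).mono inf_le_right h)

theorem iSup_jointAdE_eq_top {H Z : L} (hcomm : ⁅H, Z⁆ = 0) (hH : IsRatSS K H)
    (hZ : IsRatSS K Z) : ⨆ p, jointAdE K H Z p = ⊤ :=
  Commute.iSup_eigenspace_inf_eigenspace_eq_top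
    (LinearMap.ext fun x => by simp [leibniz_lie H Z x, hcomm]) hH hZ

theorem iSup_adE_eq_of_jointAdE_le {H Z : L} (hcomm : ⁅H, Z⁆ = 0) (hH : IsRatSS K H)
    (hZ : IsRatSS K Z) {S : L} (w : ℚ × ℚ → ℚ) (hw : ∀ p, jointAdE K H Z p ≤ adE K S (w p))
    (P : ℚ → Prop) :
    ⨆ q, ⨆ _ : P q, adE K S q = ⨆ p, ⨆ _ : P (w p), jointAdE K H Z p :=
  Module.End.iSup_eigenspace_ratCast_eq_iSup (iSup_jointAdE_eq_top hcomm hH hZ) w hw P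

end JointEigenspaces

theorem deformation_subspace_identity_general
    {K L : Type*} [Field K] [CharZero K] [LieRing L] [LieAlgebra K L]
    (H Z : L) (hcomm : ⁅H, Z⁆ = 0) (hH : IsRatSS K H) (hZ : IsRatSS K Z)
    (s t : ℚ) (hst : s < t)
    (hreg : ∀ r : ℚ, s < r → r < t → adE K (H + (r : K) • Z) 1 ≤ adE K Z 0) :
    ggt K (H + (t : K) • Z) 1 ⊔ (adE K (H + (t : K) • Z) 1 ⊓ glt K Z 0) =
      ggt K (H + (s : K) • Z) 1 ⊔ (adE K (H + (s : K) • Z) 1 ⊓ ggt K Z 0) := by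
  have hsum (r : ℚ) :=
    iSup_adE_eq_of_jointAdE_le hcomm hH hZ _ (jointAdE_le_adE_add_smul H Z r)
  have hsumZ := iSup_adE_eq_of_jointAdE_le hcomm hH hZ Prod.snd fun _ => inf_le_right
  have hwall (r : ℚ) :
      adE K (H + (r : K) • Z) 1 = ⨆ p, ⨆ _ : p.1 + r * p.2 = 1, jointAdE K H Z p := by
    rw [← hsum r (· = 1), iSup_iSup_eq_left]
  have hcross (p : ℚ × ℚ)
      (h : ¬((1 < p.1 + t * p.2 ∨ p.1 + t * p.2 = 1 ∧ p.2 < 0) ↔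
        (1 < p.1 + s * p.2 ∨ p.1 + s * p.2 = 1 ∧ 0 < p.2))) : jointAdE K H Z p = ⊥ := by
    obtain ⟨r, hsr, hrt, hb, hr⟩ := exists_wall_of_not_iff hst h
    exact jointAdE_eq_bot_of_le_adE_zero hb
      ((hr ▸ jointAdE_le_adE_add_smul H Z r p).trans (hreg r hsr hrt))
  simp only [ggt, glt, hsum, hsumZ, hwall, (iSupIndep_jointAdE H Z).biSup_inf_biSup,
    biSup_sup_biSup]
  exact le_antisymm (biSup_le_biSup_of_eq_bot fun p h h' => hcross p (by tauto))
    (biSup_le_biSup_of_eq_bot fun p h h' => hcross p (by tauto))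

/-- Let `H, Z` be commuting rational semisimple elements, `H_t = H + tZ`,
`𝔳_t = 𝔤^{H_t}_{>1}`, `𝔴_t = 𝔤^{H_t}_1`.  If `0 ≤ s < t` and every `r ∈ (s,t)` is
regular (i.e. `𝔤^{H_r}_1 ⊆ 𝔤^Z_0`), then
`𝔳_t ⊕ (𝔴_t ∩ 𝔤^Z_{<0}) = 𝔳_s ⊕ (𝔴_s ∩ 𝔤^Z_{>0})`. -/
theorem deformation_subspace_identity
    {K L : Type*} [Field K] [CharZero K] [LieRing L] [LieAlgebra K L]
    [FiniteDimensional K L]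
    (H Z : L) (hcomm : ⁅H, Z⁆ = 0) (hH : IsRatSS K H) (hZ : IsRatSS K Z)
    (s t : ℚ) (hs : 0 ≤ s) (hst : s < t)
    (hreg : ∀ r : ℚ, s < r → r < t → adE K (H + (r : K) • Z) 1 ≤ adE K Z 0) :
    ggt K (H + (t : K) • Z) 1 ⊔ (adE K (H + (t : K) • Z) 1 ⊓ glt K Z 0) =
      ggt K (H + (s : K) • Z) 1 ⊔ (adE K (H + (s : K) • Z) 1 ⊓ ggt K Z 0) :=
  deformation_subspace_identity_general H Z hcomm hH hZ s t hst hreg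
end
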